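/- Let $A$ be a C*-algebra, let $x \in A$ be a nonzero contraction ($\|x\| \leq 1$), and let $b \in A_+$. Then for any $\varepsilon > 0$, $(x b x^* - \varepsilon)_+ \precsim x (b - \varepsilon)_+ x^* \precsim (b - \varepsilon)_+$. -/

import Mathlib

open Filter Topology

/-- Cuntz subequivalence `a ≾ b` in a C*-algebra. -/
def CuntzLE {A : Type*} [NonUnitalCStarAlgebra A] (a b : A) : Prop :=
  ∃ v : ℕ → A, Tendsto (fun n => ‖a - v n * b * star (v n)‖) atTop (𝓝 0)

/-- The cut-down `(a - ε)₊` via continuous functional calculus with `t ↦ max (t - ε) 0`. -/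
noncomputable def posCut {A : Type*} [NonUnitalCStarAlgebra A] [PartialOrder A]
    [StarOrderedRing A] (a : A) (ε : ℝ) : A :=
  cfcₙ (fun t : ℝ => max (t - ε) 0) a

/-!
The second comparison is witnessed by the constant sequence `x`. For the first, put
`a = x b x*` and `c = x (b - ε)₊ x*`; since `b ≤ (b - ε)₊ + ε` and `x x* ≤ 1`, we have
`a ≤ c + ε` in the unitization, and this alone forces `(a - ε)₊ ≾ c`. Indeed, for a cutoff
`h = g(a)` vanishing below `ε - δ` and equal to `1` above `ε`, one has
`(a - ε)₊ ≤ h (a - ε) h + δ h ≤ h c h + δ h`. Finally, whenever `0 ≤ e ≤ c' + d` with `c' ≥ 0`,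
the element `v = e^{1/2} φ(c')` with `φ(t) = √t / (t + δ)` satisfies `‖e - v c' v*‖ ≤ 2δ + ‖d‖`:
`e - v c' v* = e^{1/2} (1 - ψ(c')) e^{1/2}` with `ψ(t) = t² / (t + δ)²`, whose norm is that of
`r e r ≤ r (c' + d) r` for `r = (1 - ψ(c'))^{1/2}`, and `‖r c' r‖ = ‖c' (1 - ψ(c'))‖ ≤ 2δ`.
-/

open Unitization
open scoped CStarAlgebra

lemma exists_cutoff {ε δ : ℝ} (hδ : 0 < δ) (hδε : δ ≤ ε) :
    ∃ g : ℝ → ℝ, Continuous g ∧ g 0 = 0 ∧ (∀ t, 0 ≤ g t ∧ g t ≤ 1) ∧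
      ∀ t, max (t - ε) 0 ≤ g t * (t - ε) * g t + δ * g t := by
  refine ⟨fun t => min 1 (max ((t - (ε - δ)) / δ) 0), by fun_prop, ?_,
    fun t => ⟨by positivity, min_le_left _ _⟩, fun t => ?_⟩
  · beta_reduce
    rw [max_eq_right (div_nonpos_of_nonpos_of_nonneg (by linarith : 0 - (ε - δ) ≤ 0) hδ.le),
      min_eq_right zero_le_one]
  · rcases le_or_gt t (ε - δ) with ht | ht
    · have : (t - (ε - δ)) / δ ≤ 0 := div_nonpos_of_nonpos_of_nonneg (by linarith) hδ.le
      simp [this, show t - ε ≤ 0 by linarith]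
    rcases le_or_gt ε t with ht' | ht'
    · have : 1 ≤ (t - (ε - δ)) / δ := by rw [le_div_iff₀ hδ]; linarith
      simp [this, show 0 ≤ t - ε by linarith, hδ.le]
    · have h0 : 0 ≤ (t - (ε - δ)) / δ := div_nonneg (by linarith) hδ.le
      have h1 : (t - (ε - δ)) / δ ≤ 1 := by rw [div_le_one hδ]; linarith
      simp only [max_eq_left h0, min_eq_right h1, max_eq_right (by linarith : t - ε ≤ 0)]
      nlinarith [mul_nonneg h0 (sub_nonneg.2 h1)]

lemma exists_approxUnit_profile {δ : ℝ} (hδ : 0 < δ) :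
    ∃ φ : ℝ → ℝ, ContinuousOn φ (Set.Ici 0) ∧ φ 0 = 0 ∧ ∀ t, 0 ≤ t →
      0 ≤ φ t * t * φ t ∧ φ t * t * φ t ≤ 1 ∧ t * (1 - φ t * t * φ t) ≤ 2 * δ := by
  refine ⟨fun t => √t / (t + δ), ?_, by simp, fun t ht => ?_⟩
  · exact Real.continuous_sqrt.continuousOn.div (by fun_prop)
      fun t (ht : 0 ≤ t) => by positivity
  have hsq : √t / (t + δ) * t * (√t / (t + δ)) = t ^ 2 / (t + δ) ^ 2 := by
    field_simp
    rw [Real.sq_sqrt ht, sq]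
  have hpos : 0 < (t + δ) ^ 2 := by positivity
  simp only [hsq]
  refine ⟨by positivity, by rw [div_le_one hpos]; nlinarith, ?_⟩
  rw [one_sub_div hpos.ne', mul_div_assoc', div_le_iff₀ hpos]
  nlinarith [mul_nonneg (mul_nonneg hδ.le hδ.le) ht, pow_pos hδ 3]

section

variable {A : Type*} [NonUnitalCStarAlgebra A]

lemma cuntzLE_mul_mul_star (x b : A) : CuntzLE (x * b * star x) b :=
  ⟨fun _ => x, by simp⟩

variable [PartialOrder A] [StarOrderedRing A]

lemma norm_conj_le_add_norm_of_le_add {e c d r : A} (he : 0 ≤ e) (hle : e ≤ c + d)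
    (hr : IsSelfAdjoint r) (hr1 : ‖r‖ ≤ 1) : ‖r * e * r‖ ≤ ‖r * c * r‖ + ‖d‖ := by
  have hrdr : ‖r * d * r‖ ≤ ‖d‖ :=
    calc ‖r * d * r‖ ≤ ‖r‖ * ‖d‖ * ‖r‖ := norm_mul₃_le
      _ ≤ 1 * ‖d‖ * 1 := by gcongr
      _ = ‖d‖ := by ring
  calc ‖r * e * r‖ ≤ ‖r * (c + d) * r‖ :=
        CStarAlgebra.norm_le_norm_of_nonneg_of_le (hr.conjugate_nonneg he)
          (hr.conjugate_le_conjugate hle)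
    _ ≤ ‖r * c * r‖ + ‖r * d * r‖ := by rw [mul_add, add_mul]; exact norm_add_le _ _
    _ ≤ ‖r * c * r‖ + ‖d‖ := by gcongr

end

section Unital

variable {B : Type*} [CStarAlgebra B]

lemma cfc_mul_mul_self (f g : ℝ → ℝ) (a : B) (hf : ContinuousOn f (spectrum ℝ a))
    (hg : ContinuousOn g (spectrum ℝ a)) :
    cfc (fun t => f t * g t * f t) a = cfc f a * cfc g a * cfc f a := by
  rw [cfc_mul (fun t => f t * g t) f a (hf.mul hg) hf, cfc_mul f g a hf hg]

variable [PartialOrder B] [StarOrderedRing B]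

open CFC in
lemma norm_sub_sqrt_mul_cfc_mul_sqrt_le {E C D : B} {f : ℝ → ℝ} {η : ℝ}
    (hE : 0 ≤ E) (hC : 0 ≤ C) (hle : E ≤ C + D) (hf : ContinuousOn f (spectrum ℝ C))
    (hf01 : ∀ t ∈ spectrum ℝ C, 0 ≤ f t ∧ f t ≤ 1) (hη : 0 ≤ η)
    (hfη : ∀ t ∈ spectrum ℝ C, t * (1 - f t) ≤ η) :
    ‖E - sqrt E * cfc f C * sqrt E‖ ≤ η + ‖D‖ := by
  set S := sqrt E
  have hSS : S * S = E := sqrt_mul_sqrt_self E hE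
  have hr : ContinuousOn (fun t => √(1 - f t)) (spectrum ℝ C) := by fun_prop
  set R := cfc (fun t => √(1 - f t)) C
  have hS : IsSelfAdjoint S := .of_nonneg (sqrt_nonneg E)
  have hR : IsSelfAdjoint R := cfc_predicate _ C
  have hRR : R * R = 1 - cfc f C := by
    rw [← cfc_mul _ _ C hr hr,
      cfc_congr fun t ht => Real.mul_self_sqrt (sub_nonneg.2 (hf01 t ht).2),
      cfc_sub _ _ C continuousOn_const hf, cfc_const_one ℝ C]
  have hR1 : ‖R‖ ≤ 1 := norm_cfc_le zero_le_one fun t ht => by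
    rw [Real.norm_of_nonneg (Real.sqrt_nonneg _)]
    exact Real.sqrt_le_one.2 (by linarith [(hf01 t ht).1])
  have hRCR : ‖R * C * R‖ ≤ η := by
    have : R * C * R = cfc (fun t => √(1 - f t) * t * √(1 - f t)) C := by
      rw [cfc_mul_mul_self _ (fun t => t) C hr continuousOn_id, cfc_id' ℝ C]
    rw [this]
    refine norm_cfc_le hη fun t ht => ?_
    have ht0 : 0 ≤ t := spectrum_nonneg_of_nonneg hC ht
    have h1f : 0 ≤ 1 - f t := sub_nonneg.2 (hf01 t ht).2
    rw [mul_right_comm, Real.mul_self_sqrt h1f, Real.norm_of_nonneg (by positivity), mul_comm]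
    exact hfη t ht
  calc ‖E - S * cfc f C * S‖ = ‖star (R * S) * (R * S)‖ := by
        have : star (R * S) * (R * S) = S * (R * R) * S := by
          rw [star_mul, hR.star_eq, hS.star_eq]
          noncomm_ring
        rw [this, hRR, ← hSS, mul_sub, sub_mul, mul_one]
    _ = ‖R * E * R‖ := by
        rw [CStarRing.norm_star_mul_self, ← CStarRing.norm_self_mul_star, star_mul, hR.star_eq,
          hS.star_eq, ← hSS]
        simp only [mul_assoc]
    _ ≤ ‖R * C * R‖ + ‖D‖ := norm_conj_le_add_norm_of_le_add hE hle hR hR1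
    _ ≤ η + ‖D‖ := by gcongr

lemma conj_le_conj_add_algebraMap_of_norm_le_one {x y z : B} {ε : ℝ} (hε : 0 ≤ ε)
    (hx : ‖x‖ ≤ 1) (hyz : y ≤ z + algebraMap ℝ B ε) :
    x * y * star x ≤ x * z * star x + algebraMap ℝ B ε := by
  have hxx : x * star x ≤ 1 :=
    (CStarAlgebra.norm_le_one_iff_of_nonneg _ (mul_star_self_nonneg x)).1 <| by
      rw [CStarRing.norm_self_mul_star]
      exact mul_le_one₀ hx (norm_nonneg x) hx
  calc x * y * star x ≤ x * (z + algebraMap ℝ B ε) * star x :=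
        star_right_conjugate_le_conjugate hyz x
    _ = x * z * star x + ε • (x * star x) := by
        simp [mul_add, add_mul, Algebra.algebraMap_eq_smul_one]
    _ ≤ x * z * star x + ε • 1 := by gcongr
    _ = x * z * star x + algebraMap ℝ B ε := by rw [Algebra.algebraMap_eq_smul_one]

end Unital

section NonUnital

variable {A : Type*} [NonUnitalCStarAlgebra A] [PartialOrder A] [StarOrderedRing A]

lemma exists_norm_sub_conj_le_of_le_add {e c d : A} (he : 0 ≤ e) (hc : 0 ≤ c)
    (hle : e ≤ c + d) {δ : ℝ} (hδ : 0 < δ) :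
    ∃ v : A, ‖e - v * c * star v‖ ≤ 2 * δ + ‖d‖ := by
  obtain ⟨φ, hφ, hφ0, hφ1⟩ := exists_approxUnit_profile hδ
  have hC : 0 ≤ (c : A⁺¹) := inr_nonneg_iff.2 hc
  have hσC : spectrum ℝ (c : A⁺¹) ⊆ Set.Ici 0 := fun t ht => spectrum_nonneg_of_nonneg hC ht
  set w := cfcₙ φ c
  have hw : IsSelfAdjoint w := cfcₙ_predicate _ c
  have hW : (w : A⁺¹) = cfc φ (c : A⁺¹) := real_cfcₙ_eq_cfc_inr c φ hφ0
  refine ⟨CFC.sqrt e * w, ?_⟩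
  have hinr : ((e - CFC.sqrt e * w * c * star (CFC.sqrt e * w) : A) : A⁺¹) =
      (e : A⁺¹) - CFC.sqrt (e : A⁺¹) * cfc (fun t => φ t * t * φ t) (c : A⁺¹) *
        CFC.sqrt (e : A⁺¹) := by
    rw [cfc_mul_mul_self φ (fun t => t) _ (hφ.mono hσC) continuousOn_id, cfc_id' ℝ (c : A⁺¹),
      ← hW, sqrt_inr, star_mul, hw.star_eq, (CFC.sqrt_nonneg e).isSelfAdjoint.star_eq]
    simp [mul_assoc]
  rw [← norm_inr (𝕜 := ℂ), hinr, ← norm_inr (𝕜 := ℂ) d]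
  refine norm_sub_sqrt_mul_cfc_mul_sqrt_le (inr_nonneg_iff.2 he) hC ?_
    (((hφ.mono hσC).mul continuousOn_id).mul (hφ.mono hσC))
    (fun t ht => ⟨(hφ1 t (hσC ht)).1, (hφ1 t (hσC ht)).2.1⟩) (by positivity)
    (fun t ht => (hφ1 t (hσC ht)).2.2)
  rw [← inr_add ℂ]
  exact (inr_le_iff e (c + d) he.isSelfAdjoint (he.trans hle).isSelfAdjoint).2 hle

lemma exists_norm_posCut_sub_conj_le {a c : A} (ha : IsSelfAdjoint a) (hc : 0 ≤ c) {ε δ : ℝ}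
    (hδ : 0 < δ) (hδε : δ ≤ ε) (hac : (a : A⁺¹) ≤ c + algebraMap ℝ A⁺¹ ε) :
    ∃ v : A, ‖posCut a ε - v * c * star v‖ ≤ 3 * δ := by
  obtain ⟨g, hg, hg0, hg01, hgle⟩ := exists_cutoff hδ hδε
  set h := cfcₙ g a
  have hh : IsSelfAdjoint h := cfcₙ_predicate _ a
  have hh1 : ‖h‖ ≤ 1 := norm_cfcₙ_le fun t _ => by
    rw [Real.norm_of_nonneg (hg01 t).1]
    exact (hg01 t).2
  have hH : (h : A⁺¹) = cfc g (a : A⁺¹) := real_cfcₙ_eq_cfc_inr a g hg0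
  have hle : posCut a ε ≤ h * c * h + δ • h := by
    rw [← inr_le_iff (posCut a ε) _ (cfcₙ_predicate _ a) ((hh.conjugate_nonneg hc).isSelfAdjoint.add
      ((IsSelfAdjoint.all δ).smul hh))]
    calc ((posCut a ε : A) : A⁺¹) = cfc (fun t => max (t - ε) 0) (a : A⁺¹) :=
          real_cfcₙ_eq_cfc_inr a _ (by simp [hδ.le.trans hδε])
      _ ≤ cfc (fun t => g t * (t - ε) * g t + δ * g t) (a : A⁺¹) := cfc_mono fun t _ => hgle t
      _ = h * ((a : A⁺¹) - algebraMap ℝ A⁺¹ ε) * h + δ • (h : A⁺¹) := by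
          rw [cfc_add _ _ _ (by fun_prop) (by fun_prop), cfc_const_mul _ _ _ (by fun_prop),
            cfc_mul_mul_self _ _ _ (by fun_prop) (by fun_prop),
            cfc_sub _ _ _ (by fun_prop) (by fun_prop), cfc_id' ℝ (a : A⁺¹), cfc_const ε _, hH]
      _ ≤ h * c * h + δ • (h : A⁺¹) := by
          gcongr
          exact (hh.inr ℂ).conjugate_le_conjugate (sub_le_iff_le_add.2 hac)
      _ = ((h * c * h + δ • h : A) : A⁺¹) := by simp
  obtain ⟨v, hv⟩ := exists_norm_sub_conj_le_of_le_add (cfcₙ_nonneg fun t _ => le_max_right _ _)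
    (hh.conjugate_nonneg hc) hle hδ
  refine ⟨v * h, ?_⟩
  have hvh : v * h * c * star (v * h) = v * (h * c * h) * star v := by
    rw [star_mul, hh.star_eq]
    noncomm_ring
  calc ‖posCut a ε - v * h * c * star (v * h)‖ ≤ 2 * δ + ‖δ • h‖ := hvh ▸ hv
    _ ≤ 3 * δ := by
        rw [norm_smul, Real.norm_of_nonneg hδ.le]
        nlinarith

lemma inr_le_posCut_add_algebraMap {b : A} (hb : IsSelfAdjoint b) {ε : ℝ} (hε : 0 ≤ ε) :
    (b : A⁺¹) ≤ (posCut b ε : A) + algebraMap ℝ A⁺¹ ε := by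
  rw [posCut, real_cfcₙ_eq_cfc_inr b _ (by simp [hε]), ← cfc_add_const ε _ _ (by fun_prop)
    (hb.inr ℂ)]
  conv_lhs => rw [← cfc_id' ℝ (b : A⁺¹) (hb.inr ℂ)]
  exact cfc_mono fun t _ => by linarith [le_max_left (t - ε) 0]

lemma cuntzLE_posCut_of_le_add_algebraMap {a c : A} (ha : IsSelfAdjoint a) (hc : 0 ≤ c) {ε : ℝ}
    (hε : 0 < ε) (hac : (a : A⁺¹) ≤ c + algebraMap ℝ A⁺¹ ε) : CuntzLE (posCut a ε) c := by
  choose v hv using fun n : ℕ => exists_norm_posCut_sub_conj_le ha hc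
    (by positivity : 0 < ε / (n + 1)) (div_le_self hε.le (by simp)) hac
  refine ⟨v, squeeze_zero (fun n => norm_nonneg _) hv ?_⟩
  simpa using ((tendsto_const_div_atTop_nhds_zero_nat ε).comp (tendsto_add_atTop_nat 1)).const_mul 3

end NonUnital

theorem stmt_2_general {A : Type*} [NonUnitalCStarAlgebra A] [PartialOrder A] [StarOrderedRing A]
    (x : A) (hx1 : ‖x‖ ≤ 1) (b : A) (hb : 0 ≤ b) (ε : ℝ) (hε : 0 < ε) :
    CuntzLE (posCut (x * b * star x) ε) (x * posCut b ε * star x) ∧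
      CuntzLE (x * posCut b ε * star x) (posCut b ε) := by
  have hP : 0 ≤ posCut b ε := cfcₙ_nonneg fun t _ => le_max_right _ _
  refine ⟨cuntzLE_posCut_of_le_add_algebraMap (hb.isSelfAdjoint.conjugate x)
    (star_right_conjugate_nonneg hP x) hε ?_, cuntzLE_mul_mul_star x _⟩
  have := conj_le_conj_add_algebraMap_of_norm_le_one (x := (x : A⁺¹)) hε.le
    (by rwa [norm_inr]) (inr_le_posCut_add_algebraMap hb.isSelfAdjoint hε.le)
  simpa [inr_mul, inr_star] using this

/-- For a nonzero contraction `x` and positive `b`: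
`(x b x* - ε)₊ ≾ x (b - ε)₊ x* ≾ (b - ε)₊`. -/
theorem stmt_2 {A : Type*} [NonUnitalCStarAlgebra A] [PartialOrder A] [StarOrderedRing A]
    (x : A) (hx : x ≠ 0) (hx1 : ‖x‖ ≤ 1) (b : A) (hb : 0 ≤ b) (ε : ℝ) (hε : 0 < ε) :
    CuntzLE (posCut (x * b * star x) ε) (x * posCut b ε * star x) ∧
      CuntzLE (x * posCut b ε * star x) (posCut b ε) :=
  stmt_2_general x hx1 b hb ε hε
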